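/- Let φ, ψ : ℝ → ℝ with ψ(x) = ∑_{k∈ℤ} g(k) √2 φ(2x − k), where g has finitely many nonzero terms, and suppose the integer translates {φ(· − n)}_{n∈ℤ} form an orthonormal system in L²(ℝ) and g(k) = (−1)^k h(1−k) for a finite real quadrature mirror filter h satisfying ∑_k h(k)h(k−2m) = δ_{0,m}. Then the translates {ψ(· − n)}_{n∈ℤ} form an orthonormal system in L²(ℝ). -/

import Mathlib

open MeasureTheory Function

/-!
Writing `φ₁ₖ(x) = √2 φ(2x - k)`, the change of variables `y = 2x` shows that the `φ₁ₖ` are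
orthonormal as well, and substituting `k ↦ k - 2m` in the two-scale relation gives
`ψ(x - m) = ∑ⱼ g(j - 2m) φ₁ⱼ(x)`. Hence `⟨ψ(· - m), ψ(· - n)⟩ = ∑ⱼ g(j - 2m) g(j - 2n)`, and under
`k = 1 - j + 2m` the signs `(-1)^(j - 2m) (-1)^(j - 2n)` cancel and this becomes the
quadrature mirror sum `∑ₖ h(k) h(k - 2(m - n)) = δ_{m,n}`.
-/

section AlternatingFlip

variable {h g : ℤ → ℝ}

theorem support_finite_of_alternatingFlip (hfin : (support h).Finite)
    (hg : ∀ k : ℤ, g k = (-1 : ℝ) ^ k * h (1 - k)) : (support g).Finite := by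
  refine (hfin.preimage (sub_right_injective (b := (1 : ℤ))).injOn).subset fun k hk => ?_
  simp only [mem_support, Set.mem_preimage, hg] at hk ⊢
  exact right_ne_zero_of_mul hk

theorem finsum_alternatingFlip_mul_shift
    (hQMF : ∀ m : ℤ, (∑ᶠ k : ℤ, h k * h (k - 2 * m)) = if m = 0 then 1 else 0)
    (hg : ∀ k : ℤ, g k = (-1 : ℝ) ^ k * h (1 - k)) (m n : ℤ) :
    (∑ᶠ j : ℤ, g (j - 2 * m) * g (j - 2 * n)) = if m = n then 1 else 0 := by
  have hterm : ∀ k : ℤ, g (1 - k) * g (1 - k + 2 * m - 2 * n)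
      = h k * h (k - 2 * (m - n)) := by
    intro k
    rw [hg, hg, mul_mul_mul_comm, ← zpow_add₀ (by norm_num : (-1 : ℝ) ≠ 0),
      Even.neg_one_zpow ⟨1 - k + m - n, by ring⟩, one_mul]
    congr 2 <;> ring
  calc (∑ᶠ j : ℤ, g (j - 2 * m) * g (j - 2 * n))
      = ∑ᶠ k : ℤ, g (1 - k) * g (1 - k + 2 * m - 2 * n) := by
        rw [← finsum_comp_equiv ((Equiv.subLeft 1).trans (Equiv.addRight (2 * m)))]
        simp
    _ = if m = n then 1 else 0 := by
        simp_rw [hterm, hQMF, sub_eq_zero]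

end AlternatingFlip

theorem integral_finsum_mul_finsum_of_orthonormal {ι : Type*} [DecidableEq ι] {e : ι → ℝ → ℝ}
    (hint : ∀ i j, Integrable (fun x => e i x * e j x))
    (horth : ∀ i j, ∫ x, e i x * e j x = if i = j then 1 else 0)
    {a b : ι → ℝ} (ha : (support a).Finite) (hb : (support b).Finite) :
    ∫ x, (∑ᶠ i, a i * e i x) * (∑ᶠ j, b j * e j x) = ∑ᶠ i, a i * b i := by
  set s := ha.toFinset ∪ hb.toFinset
  have hsa : support a ⊆ s := by simp [s]
  have hsb : support b ⊆ s := by simp [s]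
  have hexpand : ∀ c : ι → ℝ, support c ⊆ s → ∀ x, ∑ᶠ i, c i * e i x = ∑ i ∈ s, c i * e i x :=
    fun c hc x => finsum_eq_sum_of_support_subset _
      ((support_mul_subset_left _ _).trans hc)
  have hprod : ∀ x, (∑ᶠ i, a i * e i x) * (∑ᶠ j, b j * e j x)
      = ∑ i ∈ s, ∑ j ∈ s, (a i * b j) * (e i x * e j x) := by
    intro x
    rw [hexpand a hsa, hexpand b hsb, Finset.sum_mul_sum]
    simp only [mul_mul_mul_comm]
  simp_rw [hprod]
  rw [integral_finsetSum _ fun i _ => integrable_finsetSum _ fun j _ => (hint i j).const_mul _]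
  simp_rw [integral_finsetSum _ fun j _ => (hint _ j).const_mul _, integral_const_mul, horth]
  rw [finsum_eq_sum_of_support_subset _ ((support_mul_subset_left _ _).trans hsa)]
  refine Finset.sum_congr rfl fun i hi => ?_
  simp [hi]

/-- `φ₁ₖ` in the notation `φⱼₖ(x) = 2^(j/2) φ(2^j x - k)`. -/
noncomputable def dyadicTranslate (φ : ℝ → ℝ) (k : ℤ) (x : ℝ) : ℝ :=
  Real.sqrt 2 * φ (2 * x - k)

section DyadicTranslate

variable {φ : ℝ → ℝ}

theorem dyadicTranslate_mul (a b : ℤ) (x : ℝ) :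
    dyadicTranslate φ a x * dyadicTranslate φ b x = 2 * (φ (2 * x - a) * φ (2 * x - b)) := by
  rw [dyadicTranslate, dyadicTranslate, mul_mul_mul_comm,
    Real.mul_self_sqrt zero_le_two]

theorem MeasureTheory.MemLp.integrable_comp_sub_mul_comp_sub (hφ : MemLp φ 2 volume) (a b : ℝ) :
    Integrable (fun x => φ (x - a) * φ (x - b)) := by
  have htrans : ∀ c : ℝ, MemLp (fun x => φ (x - c)) 2 volume :=
    fun c => hφ.comp_measurePreserving (measurePreserving_sub_right volume c)
  exact (htrans a).integrable_mul (htrans b)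

theorem integrable_dyadicTranslate_mul (hφ : MemLp φ 2 volume) (a b : ℤ) :
    Integrable (fun x => dyadicTranslate φ a x * dyadicTranslate φ b x) := by
  simp_rw [dyadicTranslate_mul]
  exact ((hφ.integrable_comp_sub_mul_comp_sub a b).comp_mul_left' two_ne_zero).const_mul 2

theorem integral_dyadicTranslate_mul
    (hφorth : ∀ m n : ℤ, (∫ x : ℝ, φ (x - m) * φ (x - n)) = if m = n then 1 else 0)
    (a b : ℤ) :
    ∫ x, dyadicTranslate φ a x * dyadicTranslate φ b x = if a = b then 1 else 0 := by
  simp_rw [dyadicTranslate_mul, integral_const_mul]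
  rw [Measure.integral_comp_mul_left (fun y => φ (y - a) * φ (y - b)) 2, hφorth, smul_eq_mul]
  norm_num

theorem comp_sub_eq_finsum_dyadicTranslate {ψ : ℝ → ℝ} {g : ℤ → ℝ}
    (hψ : ∀ x : ℝ, ψ x = ∑ᶠ k : ℤ, g k * (Real.sqrt 2 * φ (2 * x - k))) (m : ℤ) (x : ℝ) :
    ψ (x - m) = ∑ᶠ j : ℤ, g (j - 2 * m) * dyadicTranslate φ j x := by
  rw [hψ, ← finsum_comp_equiv (Equiv.subRight (2 * m))]
  refine finsum_congr fun j => ?_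
  rw [Equiv.subRight_apply, dyadicTranslate]
  push_cast
  ring_nf

end DyadicTranslate

/-- Orthonormal wavelet construction: if the integer translates of the scaling
function `φ` are orthonormal in `L²(ℝ)`, `h` is a finite quadrature mirror filter,
`g(k) = (−1)^k h(1−k)`, and `ψ(x) = ∑_k g(k) √2 φ(2x − k)`, then the integer
translates of `ψ` are orthonormal in `L²(ℝ)`. -/
theorem wavelet_translates_orthonormal
    (φ ψ : ℝ → ℝ) (h g : ℤ → ℝ)
    (hfin : (Function.support h).Finite)
    (hφmem : MemLp φ 2 (volume : Measure ℝ))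
    (hφorth : ∀ m n : ℤ, (∫ x : ℝ, φ (x - m) * φ (x - n))
        = if m = n then 1 else 0)
    (hQMF : ∀ m : ℤ, (∑ᶠ k : ℤ, h k * h (k - 2 * m)) = if m = 0 then 1 else 0)
    (hg : ∀ k : ℤ, g k = (-1:ℝ) ^ k * h (1 - k))
    (hψ : ∀ x : ℝ, ψ x = ∑ᶠ k : ℤ, g k * (Real.sqrt 2 * φ (2 * x - k))) :
    ∀ m n : ℤ, (∫ x : ℝ, ψ (x - m) * ψ (x - n)) = if m = n then 1 else 0 := by
  intro m n
  have hgfin := support_finite_of_alternatingFlip hfin hg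
  have hshift : ∀ c : ℤ, (support fun j => g (j - c)).Finite :=
    fun c => hgfin.preimage (sub_left_injective (b := c)).injOn
  simp_rw [comp_sub_eq_finsum_dyadicTranslate hψ]
  rw [integral_finsum_mul_finsum_of_orthonormal (integrable_dyadicTranslate_mul hφmem)
    (integral_dyadicTranslate_mul hφorth) (hshift _) (hshift _)]
  exact finsum_alternatingFlip_mul_shift hQMF hg m n
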